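/- (Proposition 2) Let H[1],…,H[K] ∈ ℂ^{N_r×N_t}, R = (1/K) Σ_{k=1}^K H[k]* H[k], and let S_1,…,S_{N_RF} be a partition of {1,…,N_t} into nonempty disjoint subsets. Over all block-structured analog precoders F ∈ ℂ^{N_t×N_RF} whose r-th column is supported on S_r with nonzero block f_r, the supremum of Σ_{k=1}^K ‖H[k] F (F*F)^{-1/2}‖_F² equals K Σ_{r=1}^{N_RF} λ_1(R_{S_r}), where λ_1(R_{S_r}) is the largest eigenvalue of the principal submatrix R_{S_r}; the supremum is attained when each block equals f_r = α_r v_{S_r,1} for any nonzero scalars α_r, with v_{S_r,1} a unit eigenvector of R_{S_r} for its largest eigenvalue. -/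

import Mathlib

open Matrix BigOperators ComplexOrder

/-- The square root of a positive semidefinite matrix, as defined in the older Mathlib. -/
noncomputable def Matrix.PosSemidef.sqrt {n 𝕜 : Type*} [Fintype n] [DecidableEq n] [RCLike 𝕜]
    {A : Matrix n n 𝕜} (hA : A.PosSemidef) : Matrix n n 𝕜 :=
  (hA.1.eigenvectorUnitary : Matrix n n 𝕜) * diagonal ((↑) ∘ (√·) ∘ hA.1.eigenvalues) *
    (star (hA.1.eigenvectorUnitary : Matrix n n 𝕜))

/-- Squared Frobenius norm of a complex matrix. -/
noncomputable def frobSq {m n : ℕ} (A : Matrix (Fin m) (Fin n) ℂ) : ℝ :=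
  ∑ i, ∑ j, ‖A i j‖ ^ 2

/-!
The columns of a block-structured precoder `F` have disjoint supports, so `Fᴴ F` is diagonal with
entries `‖f_r‖²`, and `F (Fᴴ F)^{-1/2}` is the block precoder with normalized blocks `f_r / ‖f_r‖`.
The objective therefore equals `K ∑_r ρ_r(f_r)`, where `ρ_r` is the Rayleigh quotient of `R_{S_r}`.
Each Rayleigh quotient is at most `λ₁(R_{S_r})`, since `λ₁ • 1 - R_{S_r}` is positive semidefinite,
with equality at the eigenvectors for `λ₁`.
-/

open Function
open scoped MatrixOrder

theorem Finset.sum_dite_mem_univ {ι M : Type*} [Fintype ι] [DecidableEq ι] [AddCommMonoid M]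
    (s : Finset ι) (g : (i : ι) → i ∈ s → M) :
    ∑ i, (if h : i ∈ s then g i h else 0) = ∑ x : {i // i ∈ s}, g x x.2 := by
  rw [← Finset.sum_subset s.subset_univ fun i _ hi => dif_neg hi, ← Finset.sum_coe_sort s]
  exact Finset.sum_congr rfl fun x _ => dif_pos x.2

namespace Matrix

variable {ι κ 𝕜 : Type*} [RCLike 𝕜]

theorem PosSemidef.sqrt_eq_cfcSqrt [Fintype ι] [DecidableEq ι] {A : Matrix ι ι 𝕜}
    (hA : A.PosSemidef) : hA.sqrt = CFC.sqrt A := by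
  rw [CFC.sqrt_eq_cfc, cfc_nnreal_eq_real _ A hA.nonneg, hA.1.cfc_eq, IsHermitian.cfc,
    Unitary.conjStarAlgAut_apply]
  simp [PosSemidef.sqrt, Function.comp_def, max_eq_left (hA.eigenvalues_nonneg _)]

theorem PosSemidef.sqrt_eq_of_mul_self_eq [Fintype ι] [DecidableEq ι] {A B : Matrix ι ι 𝕜}
    (hA : A.PosSemidef) (hB : B.PosSemidef) (h : B * B = A) : hA.sqrt = B := by
  rw [hA.sqrt_eq_cfcSqrt]
  exact CFC.sqrt_unique h hB.nonneg

section Rayleigh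

variable [Fintype ι]

theorem re_star_dotProduct_self_nonneg (x : ι → 𝕜) : 0 ≤ RCLike.re (star x ⬝ᵥ x) :=
  (RCLike.nonneg_iff.mp (dotProduct_star_self_nonneg x)).1

theorem re_star_dotProduct_self_pos {x : ι → 𝕜} (hx : x ≠ 0) :
    0 < RCLike.re (star x ⬝ᵥ x) :=
  (RCLike.pos_iff.mp (dotProduct_star_self_pos_iff.mpr hx)).1

theorem ofReal_re_star_dotProduct_self (x : ι → 𝕜) :
    ((RCLike.re (star x ⬝ᵥ x) : ℝ) : 𝕜) = star x ⬝ᵥ x := by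
  obtain ⟨t, -, ht⟩ := RCLike.nonneg_iff_exists_ofReal.mp (dotProduct_star_self_nonneg x)
  rw [← ht, RCLike.ofReal_re]

theorem re_star_smul_dotProduct_smul (a : 𝕜) (x y : ι → 𝕜) :
    RCLike.re (star (a • x) ⬝ᵥ a • y) = ‖a‖ ^ 2 * RCLike.re (star x ⬝ᵥ y) := by
  rw [star_smul, smul_dotProduct, dotProduct_smul, smul_smul, smul_eq_mul,
    RCLike.star_def, RCLike.conj_mul, ← RCLike.ofReal_pow, RCLike.re_ofReal_mul]

noncomputable def normalize (x : ι → 𝕜) : ι → 𝕜 :=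
  (((√(RCLike.re (star x ⬝ᵥ x)))⁻¹ : ℝ) : 𝕜) • x

noncomputable def rayleighQuotient (B : Matrix ι ι 𝕜) (x : ι → 𝕜) : ℝ :=
  RCLike.re (star x ⬝ᵥ B *ᵥ x) / RCLike.re (star x ⬝ᵥ x)

theorem rayleighQuotient_eq_re_normalize (B : Matrix ι ι 𝕜) (x : ι → 𝕜) :
    B.rayleighQuotient x = RCLike.re (star (normalize x) ⬝ᵥ B *ᵥ normalize x) := by
  rw [normalize, mulVec_smul, re_star_smul_dotProduct_smul, RCLike.norm_ofReal, sq_abs, inv_pow,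
    Real.sq_sqrt (re_star_dotProduct_self_nonneg x), rayleighQuotient, div_eq_inv_mul]

theorem rayleighQuotient_smul (B : Matrix ι ι 𝕜) {a : 𝕜} (ha : a ≠ 0) (x : ι → 𝕜) :
    B.rayleighQuotient (a • x) = B.rayleighQuotient x := by
  rw [rayleighQuotient, rayleighQuotient, mulVec_smul, re_star_smul_dotProduct_smul,
    re_star_smul_dotProduct_smul, mul_div_mul_left _ _ (by positivity)]

theorem rayleighQuotient_eq_of_mulVec_eq {B : Matrix ι ι 𝕜} {v : ι → 𝕜} {μ : ℝ}
    (hv : B *ᵥ v = (μ : 𝕜) • v) (hv0 : v ≠ 0) : B.rayleighQuotient v = μ := by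
  rw [rayleighQuotient, hv, dotProduct_smul, smul_eq_mul, RCLike.re_ofReal_mul,
    mul_div_cancel_right₀ _ (re_star_dotProduct_self_pos hv0).ne']

theorem IsHermitian.re_dotProduct_mulVec_le [DecidableEq ι] {B : Matrix ι ι 𝕜}
    (hB : B.IsHermitian) {μ : ℝ} (hμ : ∀ i, hB.eigenvalues i ≤ μ) (x : ι → 𝕜) :
    RCLike.re (star x ⬝ᵥ B *ᵥ x) ≤ μ * RCLike.re (star x ⬝ᵥ x) := by
  have hle : B ≤ algebraMap ℝ _ μ := le_algebraMap_of_spectrum_le fun y hy => by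
    obtain ⟨i, rfl⟩ := hB.spectrum_real_eq_range_eigenvalues ▸ hy
    exact hμ i
  have h := (le_iff.mp hle).re_dotProduct_nonneg x
  rwa [sub_mulVec, dotProduct_sub, map_sub, Algebra.algebraMap_eq_smul_one, smul_mulVec,
    one_mulVec, dotProduct_smul, RCLike.smul_re, sub_nonneg] at h

theorem IsHermitian.rayleighQuotient_le [DecidableEq ι] {B : Matrix ι ι 𝕜}
    (hB : B.IsHermitian) {μ : ℝ} (hμ : ∀ i, hB.eigenvalues i ≤ μ) {x : ι → 𝕜} (hx : x ≠ 0) :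
    B.rayleighQuotient x ≤ μ :=
  (div_le_iff₀ (re_star_dotProduct_self_pos hx)).mpr (hB.re_dotProduct_mulVec_le hμ x)

end Rayleigh

section BlockColumns

variable [DecidableEq ι]

def blockColumns (S : κ → Finset ι) (f : (r : κ) → {i // i ∈ S r} → 𝕜) : Matrix ι κ 𝕜 :=
  of fun i r => if h : i ∈ S r then f r ⟨i, h⟩ else 0

variable (S : κ → Finset ι) (f : (r : κ) → {i // i ∈ S r} → 𝕜)

theorem conjTranspose_blockColumns_mul_mul_blockColumns_apply_self [Fintype ι]
    (M : Matrix ι ι 𝕜) (r : κ) :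
    ((blockColumns S f)ᴴ * M * blockColumns S f) r r =
      star (f r) ⬝ᵥ M.submatrix (↑) (↑) *ᵥ f r := by
  simp only [mul_apply, conjTranspose_apply, blockColumns, of_apply, apply_dite star, star_zero,
    dite_mul, mul_dite, zero_mul, mul_zero, Finset.sum_dite_mem_univ, Finset.sum_mul]
  simp only [dotProduct, mulVec, submatrix_apply, Pi.star_apply, Finset.mul_sum, Subtype.coe_eta]
  rw [Finset.sum_comm]
  exact Finset.sum_congr rfl fun x _ => Finset.sum_congr rfl fun y _ => by ring

theorem conjTranspose_blockColumns_mul_self [Fintype ι] [DecidableEq κ]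
    (hS : Pairwise (Disjoint on S)) :
    (blockColumns S f)ᴴ * blockColumns S f = diagonal fun r => star (f r) ⬝ᵥ f r := by
  ext r s
  rcases eq_or_ne r s with rfl | hrs
  · simpa [submatrix_one _ Subtype.val_injective] using
      conjTranspose_blockColumns_mul_mul_blockColumns_apply_self S f 1 r
  · rw [diagonal_apply_ne _ hrs, mul_apply]
    refine Finset.sum_eq_zero fun i _ => ?_
    simp only [conjTranspose_apply, blockColumns, of_apply]
    split_ifs with hr hs
    · exact absurd hs (Finset.disjoint_left.mp (hS hrs) hr)
    all_goals simp

theorem blockColumns_mul_diagonal [Fintype κ] [DecidableEq κ] (d : κ → 𝕜) :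
    blockColumns S f * diagonal d = blockColumns S fun r => d r • f r := by
  ext i r
  simp only [mul_diagonal, blockColumns, of_apply]
  split_ifs <;> simp [mul_comm]

theorem blockColumns_mul_inv_sqrt_gram [Fintype ι] [Fintype κ] [DecidableEq κ]
    (hS : Pairwise (Disjoint on S))
    (hPD : ((blockColumns S f)ᴴ * blockColumns S f).PosDef) :
    blockColumns S f * hPD.posSemidef.sqrt⁻¹ = blockColumns S fun r => normalize (f r) := by
  have hgram := conjTranspose_blockColumns_mul_self S f hS
  have hpos : ∀ r, 0 < RCLike.re (star (f r) ⬝ᵥ f r) := fun r => by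
    have := hPD.diag_pos (i := r)
    rw [hgram, diagonal_apply_eq] at this
    exact (RCLike.pos_iff.mp this).1
  set D : Matrix κ κ 𝕜 := diagonal fun r => ((√(RCLike.re (star (f r) ⬝ᵥ f r)) : ℝ) : 𝕜)
  have hsqrt : hPD.posSemidef.sqrt = D := by
    refine hPD.posSemidef.sqrt_eq_of_mul_self_eq
      (posSemidef_diagonal_iff.mpr fun r => RCLike.ofReal_nonneg.mpr (Real.sqrt_nonneg _)) ?_
    rw [hgram, diagonal_mul_diagonal]
    congr 1
    funext r
    rw [← RCLike.ofReal_mul, Real.mul_self_sqrt (hpos r).le, ofReal_re_star_dotProduct_self]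
  have hinv : D⁻¹ = diagonal fun r => (((√(RCLike.re (star (f r) ⬝ᵥ f r)))⁻¹ : ℝ) : 𝕜) := by
    refine inv_eq_left_inv ?_
    rw [diagonal_mul_diagonal, ← diagonal_one]
    congr 1
    funext r
    rw [← RCLike.ofReal_mul, inv_mul_cancel₀ (Real.sqrt_pos.mpr (hpos r)).ne', RCLike.ofReal_one]
  rw [hsqrt, hinv, blockColumns_mul_diagonal]
  rfl

end BlockColumns

end Matrix

theorem frobSq_eq_re_trace {m n : ℕ} (A : Matrix (Fin m) (Fin n) ℂ) :
    frobSq A = (Aᴴ * A).trace.re := by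
  simp only [frobSq, trace, diag, mul_apply, conjTranspose_apply, Complex.re_sum]
  rw [Finset.sum_comm]
  simp [RCLike.star_def, Complex.conj_mul', ← Complex.ofReal_pow]

theorem sum_frobSq_mul_eq {Kn Nr Nt NRF : ℕ} (H : Fin Kn → Matrix (Fin Nr) (Fin Nt) ℂ)
    (R : Matrix (Fin Nt) (Fin Nt) ℂ) (hR : R = (Kn : ℂ)⁻¹ • ∑ k, (H k)ᴴ * H k)
    (W : Matrix (Fin Nt) (Fin NRF) ℂ) :
    ∑ k, frobSq (H k * W) = Kn * (Wᴴ * R * W).trace.re := by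
  have hsum : ∑ k, (H k)ᴴ * H k = (Kn : ℂ) • R := by
    rcases Nat.eq_zero_or_pos Kn with rfl | hK
    · simp
    · rw [hR, smul_inv_smul₀ (by exact_mod_cast hK.ne')]
  have hgram : ∑ k, (H k * W)ᴴ * (H k * W) = Wᴴ * ((Kn : ℂ) • R) * W := by
    rw [← hsum, Matrix.mul_sum, Matrix.sum_mul]
    simp only [conjTranspose_mul, Matrix.mul_assoc]
  simp only [frobSq_eq_re_trace, ← Complex.re_sum, ← trace_sum, hgram, Matrix.mul_smul,
    Matrix.smul_mul, trace_smul, smul_eq_mul, Complex.mul_re, Complex.natCast_re,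
    Complex.natCast_im, zero_mul, sub_zero]

theorem sum_frobSq_blockColumns_mul_inv_sqrt {Kn Nr Nt NRF : ℕ}
    (H : Fin Kn → Matrix (Fin Nr) (Fin Nt) ℂ)
    (R : Matrix (Fin Nt) (Fin Nt) ℂ) (hR : R = (Kn : ℂ)⁻¹ • ∑ k, (H k)ᴴ * H k)
    (S : Fin NRF → Finset (Fin Nt)) (hS : Pairwise (Disjoint on S))
    (f : (r : Fin NRF) → {i // i ∈ S r} → ℂ)
    (hPD : ((blockColumns S f)ᴴ * blockColumns S f).PosDef) :
    ∑ k, frobSq (H k * blockColumns S f * hPD.posSemidef.sqrt⁻¹) =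
      Kn * ∑ r, (R.submatrix (↑) (↑)).rayleighQuotient (f r) := by
  simp only [Matrix.mul_assoc, blockColumns_mul_inv_sqrt_gram S f hS hPD]
  rw [sum_frobSq_mul_eq H R hR, trace, Complex.re_sum]
  congr 1
  refine Finset.sum_congr rfl fun r _ => ?_
  rw [Matrix.diag_apply, conjTranspose_blockColumns_mul_mul_blockColumns_apply_self,
    rayleighQuotient_eq_re_normalize]
  rfl

theorem stmt_9_general (Kn Nr Nt NRF : ℕ)
    (H : Fin Kn → Matrix (Fin Nr) (Fin Nt) ℂ)
    (R : Matrix (Fin Nt) (Fin Nt) ℂ)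
    (hR : R = (Kn : ℂ)⁻¹ • ∑ k, (H k)ᴴ * H k)
    (S : Fin NRF → Finset (Fin Nt))
    (hdisj : ∀ r s, r ≠ s → Disjoint (S r) (S s))
    (hHerm : ∀ r, ((R.submatrix (Subtype.val : {i // i ∈ S r} → Fin Nt)
        (Subtype.val : {i // i ∈ S r} → Fin Nt)).IsHermitian))
    (μ : Fin NRF → ℝ)
    (hμ : ∀ r, IsGreatest (Set.range (hHerm r).eigenvalues) (μ r))
    (v : (r : Fin NRF) → ({i // i ∈ S r} → ℂ))
    (hvUnit : ∀ r, ∑ x, ‖v r x‖ ^ 2 = 1)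
    (hvEig : ∀ r, (R.submatrix (Subtype.val : {i // i ∈ S r} → Fin Nt)
        (Subtype.val : {i // i ∈ S r} → Fin Nt)) *ᵥ v r = ((μ r : ℂ)) • v r) :
    (∀ (f : (r : Fin NRF) → ({i // i ∈ S r} → ℂ)), (∀ r, f r ≠ 0) →
      ∀ F : Matrix (Fin Nt) (Fin NRF) ℂ,
        (∀ i r, F i r = if h : i ∈ S r then f r ⟨i, h⟩ else 0) →
        ∀ hPD : (Fᴴ * F).PosDef,
          ∑ k, frobSq (H k * F * (hPD.posSemidef.sqrt)⁻¹) ≤ Kn * ∑ r, μ r) ∧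
    (∀ α : Fin NRF → ℂ, (∀ r, α r ≠ 0) →
      ∀ F : Matrix (Fin Nt) (Fin NRF) ℂ,
        (∀ i r, F i r = if h : i ∈ S r then α r * v r ⟨i, h⟩ else 0) →
        ∃ hPD : (Fᴴ * F).PosDef,
          ∑ k, frobSq (H k * F * (hPD.posSemidef.sqrt)⁻¹) = Kn * ∑ r, μ r) := by
  have hS : Pairwise (Disjoint on S) := fun r s hrs => hdisj r s hrs
  refine ⟨fun f hf F hF hPD => ?_, fun α hα F hF => ?_⟩
  · obtain rfl : F = blockColumns S f := Matrix.ext hF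
    rw [sum_frobSq_blockColumns_mul_inv_sqrt H R hR S hS f hPD]
    gcongr with r
    exact (hHerm r).rayleighQuotient_le (fun i => (hμ r).2 ⟨i, rfl⟩) (hf r)
  · have hv0 : ∀ r, v r ≠ 0 := fun r hr => by simpa [hr] using hvUnit r
    have hFb : F = blockColumns S fun r => α r • v r := Matrix.ext hF
    have hPD : (Fᴴ * F).PosDef := by
      rw [hFb, conjTranspose_blockColumns_mul_self S _ hS]
      exact PosDef.diagonal fun r => dotProduct_star_self_pos_iff.mpr (smul_ne_zero (hα r) (hv0 r))
    refine ⟨hPD, ?_⟩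
    subst hFb
    rw [sum_frobSq_blockColumns_mul_inv_sqrt H R hR S hS _ hPD]
    congr 1
    exact Finset.sum_congr rfl fun r _ => by
      rw [rayleighQuotient_smul _ (hα r), rayleighQuotient_eq_of_mulVec_eq (hvEig r) (hv0 r)]

/-- Proposition 2: For a partition `S₁,…,S_{N_RF}` of the antennas, over
all block-structured analog precoders `F` (whose `r`-th column is supported on `S_r`
with nonzero block `f_r`), the relaxed objective `∑ₖ ‖H[k] F (FᴴF)^{-1/2}‖_F²` is
bounded above by `K ∑ᵣ λ₁(R_{S_r})`, the sum of the largest eigenvalues of the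
principal submatrices `R_{S_r}`, and this value is attained when each block is
`f_r = α_r • v_r` for nonzero scalars `α_r`, with `v_r` a unit eigenvector of `R_{S_r}`
for its largest eigenvalue `μ r`. -/
theorem stmt_9 (Kn Nr Nt NRF : ℕ) (hK : 0 < Kn)
    (H : Fin Kn → Matrix (Fin Nr) (Fin Nt) ℂ)
    (R : Matrix (Fin Nt) (Fin Nt) ℂ)
    (hR : R = (Kn : ℂ)⁻¹ • ∑ k, (H k)ᴴ * H k)
    (S : Fin NRF → Finset (Fin Nt))
    (hnonempty : ∀ r, (S r).Nonempty)
    (hdisj : ∀ r s, r ≠ s → Disjoint (S r) (S s))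
    (hcover : ∀ i, ∃ r, i ∈ S r)
    (hHerm : ∀ r, ((R.submatrix (Subtype.val : {i // i ∈ S r} → Fin Nt)
        (Subtype.val : {i // i ∈ S r} → Fin Nt)).IsHermitian))
    (μ : Fin NRF → ℝ)
    (hμ : ∀ r, IsGreatest (Set.range (hHerm r).eigenvalues) (μ r))
    (v : (r : Fin NRF) → ({i // i ∈ S r} → ℂ))
    (hvUnit : ∀ r, ∑ x, ‖v r x‖ ^ 2 = 1)
    (hvEig : ∀ r, (R.submatrix (Subtype.val : {i // i ∈ S r} → Fin Nt)
        (Subtype.val : {i // i ∈ S r} → Fin Nt)) *ᵥ v r = ((μ r : ℂ)) • v r) :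
    (∀ (f : (r : Fin NRF) → ({i // i ∈ S r} → ℂ)), (∀ r, f r ≠ 0) →
      ∀ F : Matrix (Fin Nt) (Fin NRF) ℂ,
        (∀ i r, F i r = if h : i ∈ S r then f r ⟨i, h⟩ else 0) →
        ∀ hPD : (Fᴴ * F).PosDef,
          ∑ k, frobSq (H k * F * (hPD.posSemidef.sqrt)⁻¹) ≤ Kn * ∑ r, μ r) ∧
    (∀ α : Fin NRF → ℂ, (∀ r, α r ≠ 0) →
      ∀ F : Matrix (Fin Nt) (Fin NRF) ℂ,
        (∀ i r, F i r = if h : i ∈ S r then α r * v r ⟨i, h⟩ else 0) →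
        ∃ hPD : (Fᴴ * F).PosDef,
          ∑ k, frobSq (H k * F * (hPD.posSemidef.sqrt)⁻¹) = Kn * ∑ r, μ r) :=
  stmt_9_general Kn Nr Nt NRF H R hR S hdisj hHerm μ hμ v hvUnit hvEig
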